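/- arXiv:1804.09062 — 5 statements merged into one kernel-verified Lean document; each statement's English description precedes it below -/
import Mathlib

section
/- (Birch's theorem, E-projection characterization.) Let V ⊆ ℝ^n be an affine subspace, V^⊥ := {w ∈ ℝ^n : v·w = 0 for all v ∈ V}, e^V := {(e^{v_1},…,e^{v_n}) : v ∈ V}, let α ∈ ℝ^n have strictly positive entries, and let α* be the unique point of (α + V^⊥) ∩ ℝ^n_{≥0} ∩ e^V. Then for every β ∈ e^V, α* is the unique minimizer of x ↦ D(x‖β) over the set (α + V^⊥) ∩ ℝ^n_{≥0}. -/
/-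
Write `α* = e^{u}` and `β = e^{u'}` with `u, u' ∈ V`. For every `z ≥ 0` in `α + V^⊥`, expanding the
logarithms gives the Pythagorean identity `D(z‖β) = D(z‖α*) + D(α*‖β) + ⟨z - α*, u - u'⟩`, and the
last term vanishes because `z - α* ∈ V^⊥` while `u - u'` is a difference of points of `V`. Since
`D(z‖α*) ≥ 0` with equality only at `z = α*`, the point `α*` is the unique minimizer.
-/

/-- Extended relative entropy `D(x‖y)` (real-valued form, valid when `y` has
positive entries and `x` has nonnegative entries). -/
noncomputable def KL {ι : Type*} [Fintype ι] (x y : ι → ℝ) : ℝ :=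
  ∑ i, (x i * Real.log (x i / y i) - x i + y i)

open Real InformationTheory

lemma mul_log_div_sub_add_eq_mul_klFun {x y : ℝ} (hy : 0 < y) :
    x * log (x / y) - x + y = y * klFun (x / y) := by
  rw [klFun_apply]
  field_simp
  ring

lemma mul_log_div_eq_add_mul_sub_log {z x y : ℝ} (hx : 0 < x) (hy : 0 < y) :
    z * log (z / y) = z * log (z / x) + z * (log x - log y) := by
  rcases eq_or_ne z 0 with rfl | hz
  · simp
  · rw [log_div hz hx.ne', log_div hz hy.ne']
    ring

section KL

variable {ι : Type*} [Fintype ι] {x y z : ι → ℝ}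

lemma KL_eq_sum_mul_klFun (hy : ∀ i, 0 < y i) : KL x y = ∑ i, y i * klFun (x i / y i) :=
  Finset.sum_congr rfl fun i _ => mul_log_div_sub_add_eq_mul_klFun (hy i)

lemma KL_nonneg (hx : ∀ i, 0 ≤ x i) (hy : ∀ i, 0 < y i) : 0 ≤ KL x y := by
  rw [KL_eq_sum_mul_klFun hy]
  exact Finset.sum_nonneg fun i _ =>
    mul_nonneg (hy i).le (klFun_nonneg (div_nonneg (hx i) (hy i).le))

lemma KL_eq_zero_iff (hx : ∀ i, 0 ≤ x i) (hy : ∀ i, 0 < y i) : KL x y = 0 ↔ x = y := by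
  have hx_div : ∀ i, 0 ≤ x i / y i := fun i => div_nonneg (hx i) (hy i).le
  rw [KL_eq_sum_mul_klFun hy, Finset.sum_eq_zero_iff_of_nonneg
    fun i _ => mul_nonneg (hy i).le (klFun_nonneg (hx_div i)), funext_iff]
  refine forall_congr' fun i => ?_
  rw [mul_eq_zero, or_iff_right (hy i).ne', klFun_eq_zero_iff (hx_div i), div_eq_one_iff_eq (hy i).ne']
  simp

lemma KL_eq_KL_add_KL_add_sum (hx : ∀ i, 0 < x i) (hy : ∀ i, 0 < y i) :
    KL z y = KL z x + KL x y + ∑ i, (z i - x i) * (log (x i) - log (y i)) := by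
  simp only [KL, ← Finset.sum_add_distrib]
  refine Finset.sum_congr rfl fun i _ => ?_
  rw [mul_log_div_eq_add_mul_sub_log (hx i) (hy i), log_div (hx i).ne' (hy i).ne']
  ring

lemma sum_sub_mul_sub_eq_zero {V : Set (ι → ℝ)} {α a u u' : ι → ℝ}
    (hz : ∃ w, (∀ v ∈ V, ∑ i, v i * w i = 0) ∧ z = α + w)
    (ha : ∃ w, (∀ v ∈ V, ∑ i, v i * w i = 0) ∧ a = α + w) (hu : u ∈ V) (hu' : u' ∈ V) :
    ∑ i, (z i - a i) * (u i - u' i) = 0 := by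
  obtain ⟨w, hw, rfl⟩ := hz
  obtain ⟨w', hw', rfl⟩ := ha
  change (α + w - (α + w')) ⬝ᵥ (u - u') = 0
  have h₁ : u ⬝ᵥ w = 0 := hw u hu
  have h₂ : u' ⬝ᵥ w = 0 := hw u' hu'
  have h₃ : u ⬝ᵥ w' = 0 := hw' u hu
  have h₄ : u' ⬝ᵥ w' = 0 := hw' u' hu'
  simp only [add_sub_add_left_eq_sub, sub_dotProduct, dotProduct_sub, dotProduct_comm w,
    dotProduct_comm w', h₁, h₂, h₃, h₄, sub_zero]

lemma KL_exp_eq_KL_add_KL {V : Set (ι → ℝ)} {α a u u' : ι → ℝ}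
    (hz : ∃ w, (∀ v ∈ V, ∑ i, v i * w i = 0) ∧ z = α + w)
    (ha : ∃ w, (∀ v ∈ V, ∑ i, v i * w i = 0) ∧ a = α + w)
    (ha_exp : a = fun i => exp (u i)) (hu : u ∈ V) (hu' : u' ∈ V) :
    KL z (fun i => exp (u' i)) = KL z a + KL a (fun i => exp (u' i)) := by
  subst ha_exp
  rw [KL_eq_KL_add_KL_add_sum (fun i => exp_pos (u i)) (fun i => exp_pos (u' i))]
  simp only [log_exp]
  rw [sum_sub_mul_sub_eq_zero hz ha hu hu', add_zero]

end KL

theorem birch_eprojection_general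
    (n : ℕ) (V : Set (Fin n → ℝ))
    (α : Fin n → ℝ)
    (αstar : Fin n → ℝ)
    (hstar :
      ((∃ w : Fin n → ℝ, (∀ v ∈ V, ∑ i, v i * w i = 0) ∧ αstar = α + w) ∧
        (∀ i, 0 ≤ αstar i)) ∧
      (∃ v ∈ V, αstar = fun i => Real.exp (v i)))
    (β : Fin n → ℝ) (hβ : ∃ v ∈ V, β = fun i => Real.exp (v i)) :
    (∀ z : Fin n → ℝ,
        ((∃ w : Fin n → ℝ, (∀ v ∈ V, ∑ i, v i * w i = 0) ∧ z = α + w) ∧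
          (∀ i, 0 ≤ z i)) →
        KL αstar β ≤ KL z β) ∧
    (∀ z : Fin n → ℝ,
        ((∃ w : Fin n → ℝ, (∀ v ∈ V, ∑ i, v i * w i = 0) ∧ z = α + w) ∧
          (∀ i, 0 ≤ z i)) →
        KL z β = KL αstar β → z = αstar) := by
  obtain ⟨⟨hαstar, -⟩, u, hu, hαstar_exp⟩ := hstar
  obtain ⟨u', hu', rfl⟩ := hβ
  have hαstar_pos : ∀ i, 0 < αstar i := by simp [hαstar_exp, exp_pos]
  refine ⟨fun z ⟨hz, hz_nonneg⟩ => ?_, fun z ⟨hz, hz_nonneg⟩ hKL => ?_⟩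
  · linarith [KL_exp_eq_KL_add_KL hz hαstar hαstar_exp hu hu', KL_nonneg hz_nonneg hαstar_pos]
  · refine (KL_eq_zero_iff hz_nonneg hαstar_pos).1 ?_
    linarith [KL_exp_eq_KL_add_KL hz hαstar hαstar_exp hu hu']

/-- Birch's theorem, E-projection characterization: with `α*` the
unique point of `(α + V^⊥) ∩ ℝ^n_{≥0} ∩ e^V`, for every `β ∈ e^V`, `α*` is the
unique minimizer of `x ↦ D(x‖β)` over `(α + V^⊥) ∩ ℝ^n_{≥0}`. -/
theorem birch_eprojection
    (n : ℕ) (V : Set (Fin n → ℝ))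
    (hV : ∃ (p : Fin n → ℝ) (W : Submodule ℝ (Fin n → ℝ)), V = {x | x - p ∈ W})
    (α : Fin n → ℝ) (hα : ∀ i, 0 < α i)
    (αstar : Fin n → ℝ)
    (hstar :
      ((∃ w : Fin n → ℝ, (∀ v ∈ V, ∑ i, v i * w i = 0) ∧ αstar = α + w) ∧
        (∀ i, 0 ≤ αstar i)) ∧
      (∃ v ∈ V, αstar = fun i => Real.exp (v i)))
    (huniq : ∀ z : Fin n → ℝ,
      (((∃ w : Fin n → ℝ, (∀ v ∈ V, ∑ i, v i * w i = 0) ∧ z = α + w) ∧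
        (∀ i, 0 ≤ z i)) ∧
      (∃ v ∈ V, z = fun i => Real.exp (v i))) → z = αstar)
    (β : Fin n → ℝ) (hβ : ∃ v ∈ V, β = fun i => Real.exp (v i)) :
    (∀ z : Fin n → ℝ,
        ((∃ w : Fin n → ℝ, (∀ v ∈ V, ∑ i, v i * w i = 0) ∧ z = α + w) ∧
          (∀ i, 0 ≤ z i)) →
        KL αstar β ≤ KL z β) ∧
    (∀ z : Fin n → ℝ,
        ((∃ w : Fin n → ℝ, (∀ v ∈ V, ∑ i, v i * w i = 0) ∧ z = α + w) ∧
          (∀ i, 0 ≤ z i)) →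
        KL z β = KL αstar β → z = αstar) :=
  birch_eprojection_general n V α αstar hstar β hβ
end

section
/- (Birch's theorem, M-projection characterization.) Let V ⊆ ℝ^n be an affine subspace, V^⊥ := {w ∈ ℝ^n : v·w = 0 for all v ∈ V}, e^V := {(e^{v_1},…,e^{v_n}) : v ∈ V}, let α ∈ ℝ^n have strictly positive entries, and let α* be the unique point of (α + V^⊥) ∩ ℝ^n_{≥0} ∩ e^V. Then α* is the unique minimizer of y ↦ D(α‖y) over e^V; moreover D(α‖α*) + D(α*‖β) = D(α‖β) for every β ∈ e^V. -/
/-! Writing `α* = α + w` with `w ⟂ V` and `α* = e^{v₀}`, `β = e^{v}` with `v₀, v ∈ V`, the three-term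
identity `D(α‖α*) + D(α*‖β) - D(α‖β) = ∑ᵢ (α*ᵢ - αᵢ)(log α*ᵢ - log βᵢ) = ∑ᵢ wᵢ (v₀ᵢ - vᵢ)` vanishes,
which is the Pythagorean identity. Minimality and uniqueness then follow from `D(α*‖β) ≥ 0` with
equality only at `β = α*`. -/

open Real InformationTheory

section KL

variable {ι : Type*} [Fintype ι] {x y z : ι → ℝ}

lemma KL_term_eq_mul_klFun (a : ℝ) {b : ℝ} (hb : b ≠ 0) :
    a * log (a / b) - a + b = b * klFun (a / b) := by
  rw [klFun_apply]
  field_simp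
  ring

lemma KL_term_nonneg {a b : ℝ} (ha : 0 ≤ a) (hb : 0 < b) : 0 ≤ a * log (a / b) - a + b := by
  rw [KL_term_eq_mul_klFun a hb.ne']
  exact mul_nonneg hb.le (klFun_nonneg (div_nonneg ha hb.le))

lemma KL_term_eq_zero_iff {a b : ℝ} (ha : 0 ≤ a) (hb : 0 < b) :
    a * log (a / b) - a + b = 0 ↔ a = b := by
  rw [KL_term_eq_mul_klFun a hb.ne', mul_eq_zero_iff_left hb.ne',
    klFun_eq_zero_iff (div_nonneg ha hb.le), div_eq_one_iff_eq hb.ne']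

lemma eq_of_KL_eq_zero (hx : ∀ i, 0 ≤ x i) (hy : ∀ i, 0 < y i) (h : KL x y = 0) : x = y :=
  funext fun i => (KL_term_eq_zero_iff (hx i) (hy i)).mp <|
    (Finset.sum_eq_zero_iff_of_nonneg fun j _ => KL_term_nonneg (hx j) (hy j)).mp h i
      (Finset.mem_univ i)

lemma KL_add_KL_sub_KL (hy : ∀ i, y i ≠ 0) (hz : ∀ i, z i ≠ 0) :
    KL x y + KL y z - KL x z = ∑ i, (y i - x i) * (log (y i) - log (z i)) := by
  simp only [KL, ← Finset.sum_add_distrib, ← Finset.sum_sub_distrib]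
  refine Finset.sum_congr rfl fun i _ => ?_
  rw [log_div (hy i) (hz i)]
  -- `log (x/y) = log x - log y` fails only at `x = 0`, where both sides carry the factor `x`
  rcases eq_or_ne (x i) 0 with hx | hx
  · simp only [hx]; ring
  · rw [log_div hx (hy i), log_div hx (hz i)]; ring

lemma KL_add_KL_exp_of_orthogonal {w u v : ι → ℝ} (hxw : (fun i => exp (u i)) = x + w)
    (hu : ∑ i, u i * w i = 0) (hv : ∑ i, v i * w i = 0) :
    KL x (fun i => exp (u i)) + KL (fun i => exp (u i)) (fun i => exp (v i)) =
      KL x (fun i => exp (v i)) := by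
  have hw : ∀ i, exp (u i) - x i = w i := fun i => by
    rw [congrFun hxw i, Pi.add_apply, add_sub_cancel_left]
  have horth : ∑ i, (exp (u i) - x i) * (log (exp (u i)) - log (exp (v i))) = 0 := by
    simp only [hw, log_exp, mul_comm (w _), sub_mul, Finset.sum_sub_distrib, hu, hv, sub_zero]
  have := KL_add_KL_sub_KL (x := x) (fun i => (exp_pos (u i)).ne') fun i => (exp_pos (v i)).ne'
  linarith

end KL

theorem birch_mprojection_general
    (n : ℕ) (V : Set (Fin n → ℝ))
    (α : Fin n → ℝ)
    (αstar : Fin n → ℝ)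
    (hstar :
      ((∃ w : Fin n → ℝ, (∀ v ∈ V, ∑ i, v i * w i = 0) ∧ αstar = α + w) ∧
        (∀ i, 0 ≤ αstar i)) ∧
      (∃ v ∈ V, αstar = fun i => Real.exp (v i))) :
    (∀ β : Fin n → ℝ, (∃ v ∈ V, β = fun i => Real.exp (v i)) →
        KL α αstar ≤ KL α β) ∧
    (∀ β : Fin n → ℝ, (∃ v ∈ V, β = fun i => Real.exp (v i)) →
        KL α β = KL α αstar → β = αstar) ∧
    (∀ β : Fin n → ℝ, (∃ v ∈ V, β = fun i => Real.exp (v i)) →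
        KL α αstar + KL αstar β = KL α β) := by
  obtain ⟨⟨⟨w, hw, hαw⟩, -⟩, v₀, hv₀, rfl⟩ := hstar
  have hstar_nonneg : ∀ i, 0 ≤ exp (v₀ i) := fun i => (exp_pos _).le
  have pythagorean : ∀ v ∈ V, KL α (fun i => exp (v₀ i)) + KL (fun i => exp (v₀ i))
      (fun i => exp (v i)) = KL α (fun i => exp (v i)) := fun v hv =>
    KL_add_KL_exp_of_orthogonal hαw (hw v₀ hv₀) (hw v hv)
  refine ⟨?_, ?_, ?_⟩
  · rintro _ ⟨v, hv, rfl⟩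
    linarith [pythagorean v hv, KL_nonneg hstar_nonneg fun i => exp_pos (v i)]
  · rintro _ ⟨v, hv, rfl⟩ hKL
    exact (eq_of_KL_eq_zero hstar_nonneg (fun i => exp_pos (v i))
      (by linarith [pythagorean v hv])).symm
  · rintro _ ⟨v, hv, rfl⟩
    exact pythagorean v hv

/-- Birch's theorem, M-projection characterization: with `α*` the
unique point of `(α + V^⊥) ∩ ℝ^n_{≥0} ∩ e^V`, `α*` is the unique minimizer of
`y ↦ D(α‖y)` over `e^V`; moreover `D(α‖α*) + D(α*‖β) = D(α‖β)` for every
`β ∈ e^V`. -/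
theorem birch_mprojection
    (n : ℕ) (V : Set (Fin n → ℝ))
    (hV : ∃ (p : Fin n → ℝ) (W : Submodule ℝ (Fin n → ℝ)), V = {x | x - p ∈ W})
    (α : Fin n → ℝ) (hα : ∀ i, 0 < α i)
    (αstar : Fin n → ℝ)
    (hstar :
      ((∃ w : Fin n → ℝ, (∀ v ∈ V, ∑ i, v i * w i = 0) ∧ αstar = α + w) ∧
        (∀ i, 0 ≤ αstar i)) ∧
      (∃ v ∈ V, αstar = fun i => Real.exp (v i)))
    (huniq : ∀ z : Fin n → ℝ,
      (((∃ w : Fin n → ℝ, (∀ v ∈ V, ∑ i, v i * w i = 0) ∧ z = α + w) ∧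
        (∀ i, 0 ≤ z i)) ∧
      (∃ v ∈ V, z = fun i => Real.exp (v i))) → z = αstar) :
    (∀ β : Fin n → ℝ, (∃ v ∈ V, β = fun i => Real.exp (v i)) →
        KL α αstar ≤ KL α β) ∧
    (∀ β : Fin n → ℝ, (∃ v ∈ V, β = fun i => Real.exp (v i)) →
        KL α β = KL α αstar → β = αstar) ∧
    (∀ β : Fin n → ℝ, (∃ v ∈ V, β = fun i => Real.exp (v i)) →
        KL α αstar + KL αstar β = KL α β) :=
  birch_mprojection_general n V α αstar hstar
end

section
/- Let (S, R, k) be a detailed balanced reaction system. Then for every x0 ∈ ℝ^S with strictly positive entries, there exists a unique point of detailed balance x* in the set (x0 + H_R) ∩ ℝ^S_{>0}, where H_R is the stoichiometric subspace. -/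
/-- `q` is a point of detailed balance for the reaction system `(S, R, k)`. -/
def IsDetailedBalancePoint {S : Type*} [Fintype S]
    (R : Finset ((S → ℕ) × (S → ℕ))) (k : (S → ℕ) × (S → ℕ) → ℝ)
    (q : S → ℝ) : Prop :=
  (∀ i, 0 < q i) ∧
    ∀ r ∈ R, k r * ∏ i, q i ^ r.1 i = k (r.2, r.1) * ∏ i, q i ^ r.2 i

/-- The stoichiometric subspace `H_R`: the real span of `{y' − y : (y,y') ∈ R}`. -/
def stoichSubspace {S : Type*} [Fintype S]
    (R : Finset ((S → ℕ) × (S → ℕ))) : Submodule ℝ (S → ℝ) :=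
  Submodule.span ℝ ((fun r : (S → ℕ) × (S → ℕ) => fun i => ((r.2 i : ℝ) - (r.1 i : ℝ))) '' ↑R)

/-!
For positive `x` the detailed balance equation of a reaction `y → y'` says
`(x / q) ^ y = (x / q) ^ y'`, so, after taking logarithms, `x` is a point of detailed balance iff
`log x - log q` is orthogonal to `H_R`.

Existence (Birch's theorem): `Φ(μ) = ∑ᵢ (exp μᵢ - x0ᵢ μᵢ)` is coercive, so it attains its minimum on
the closed affine space `log q + H_Rᗮ`. At the minimiser `μ` the gradient `exp μ - x0` is orthogonal
to `H_Rᗮ`, i.e. lies in `H_R`, and `x = exp μ` is the required point, positive by construction.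

Uniqueness: for two such points `x, y` we have `x - y ∈ H_R` and `log x - log y ⊥ H_R`, so
`∑ᵢ (log xᵢ - log yᵢ) (xᵢ - yᵢ) = 0`, although every term is positive unless `xᵢ = yᵢ`.
-/

open Real Filter

lemma mul_sub_log_add_one_le_exp {b : ℝ} (hb : 0 < b) (m : ℝ) : b * (m - log b + 1) ≤ exp m := by
  have h := add_one_le_exp (m - log b)
  rw [exp_sub, exp_log hb, le_div_iff₀ hb] at h
  linarith

lemma bddBelow_range_exp_sub_mul {a : ℝ} (ha : 0 < a) :
    BddBelow (Set.range fun m => exp m - a * m) :=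
  ⟨a - a * log a, Set.forall_mem_range.2 fun m => by
    have := mul_sub_log_add_one_le_exp ha m
    linarith⟩

lemma tendsto_exp_sub_mul_cocompact_atTop {a : ℝ} (ha : 0 < a) :
    Tendsto (fun m => exp m - a * m) (cocompact ℝ) atTop := by
  rw [cocompact_eq_atBot_atTop, tendsto_sup]
  -- compare with the tangent lines of `exp` of slopes `a / 2` and `a + 1`
  constructor
  · refine tendsto_atTop_mono (fun m => ?_) (tendsto_atTop_add_const_right _
      (a / 2 * (1 - log (a / 2))) (tendsto_neg_atBot_atTop.const_mul_atTop (half_pos ha)))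
    have := mul_sub_log_add_one_le_exp (half_pos ha) m
    linarith
  · refine tendsto_atTop_mono (fun m => ?_) (tendsto_atTop_add_const_right _
      ((a + 1) * (1 - log (a + 1))) tendsto_id)
    have := mul_sub_log_add_one_le_exp (by linarith : 0 < a + 1) m
    simp only [id]
    linarith

lemma tendsto_sum_apply_cocompact_atTop {ι : Type*} [Fintype ι] {X : ι → Type*}
    [∀ i, TopologicalSpace (X i)] {f : ∀ i, X i → ℝ} (hbdd : ∀ i, BddBelow (Set.range (f i)))
    (hf : ∀ i, Tendsto (f i) (cocompact (X i)) atTop) :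
    Tendsto (fun x => ∑ i, f i (x i)) (cocompact (∀ i, X i)) atTop := by
  choose b hb using hbdd
  rw [← Filter.coprodᵢ_cocompact, tendsto_atTop]
  intro C
  refine Filter.mem_coprodᵢ_iff.2 fun i =>
    ⟨_, (hf i).eventually_ge_atTop (C - ∑ j, b j + b i), fun x hx => ?_⟩
  have hle := Finset.single_le_sum (f := fun j => f j (x j) - b j)
    (fun j _ => sub_nonneg.2 (hb j ⟨x j, rfl⟩)) (Finset.mem_univ i)
  simp only [Finset.sum_sub_distrib] at hle
  change C - ∑ j, b j + b i ≤ f i (x i) at hx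
  change C ≤ ∑ j, f j (x j)
  linarith

section
variable {S : Type*} [Fintype S]

lemma log_prod_pow_eq_sum {z : S → ℝ} (hz : ∀ i, 0 < z i) (y : S → ℕ) :
    log (∏ i, z i ^ y i) = ∑ i, (y i : ℝ) * log (z i) := by
  rw [log_prod fun i _ => (pow_pos (hz i) _).ne']
  simp only [log_pow]

abbrev dotOrthogonal (H : Submodule ℝ (S → ℝ)) : Submodule ℝ (S → ℝ) :=
  LinearMap.BilinForm.orthogonal (dotProductBilin ℝ ℝ) H

lemma mem_dotOrthogonal_span {s : Set (S → ℝ)} {u : S → ℝ} :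
    u ∈ dotOrthogonal (Submodule.span ℝ s) ↔ ∀ v ∈ s, v ⬝ᵥ u = 0 := by
  refine ⟨fun h v hv => h v (Submodule.subset_span hv), fun h v hv => ?_⟩
  exact (Submodule.span_le (p := LinearMap.ker ((dotProductBilin ℝ ℝ).flip u))).2 h hv

lemma dotOrthogonal_dotOrthogonal (H : Submodule ℝ (S → ℝ)) :
    dotOrthogonal (dotOrthogonal H) = H := by
  have hsep : ∀ u : S → ℝ, (∀ v, u ⬝ᵥ v = 0) → u = 0 :=
    fun u h => dotProduct_self_eq_zero.1 (h u)
  refine LinearMap.BilinForm.orthogonal_orthogonal ?_ ?_ H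
  · exact ⟨hsep, fun u h => hsep u fun v => (dotProduct_comm u v).trans (h v)⟩
  · exact fun u v h => (dotProduct_comm v u).trans h

lemma mul_prod_pow_eq_iff_dotProduct_eq_zero {κ κ' : ℝ} {q x : S → ℝ} {y y' : S → ℕ}
    (hκ : 0 < κ) (hq : ∀ i, 0 < q i) (hx : ∀ i, 0 < x i)
    (hqy : κ * ∏ i, q i ^ y i = κ' * ∏ i, q i ^ y' i) :
    κ * ∏ i, x i ^ y i = κ' * ∏ i, x i ^ y' i ↔
      (log ∘ x - log ∘ q) ⬝ᵥ (fun i => (y' i : ℝ) - y i) = 0 := by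
  have hz : ∀ i, 0 < (x / q) i := fun i => div_pos (hx i) (hq i)
  have hxz : ∀ m : S → ℕ, ∏ i, x i ^ m i = (∏ i, (x / q) i ^ m i) * ∏ i, q i ^ m i := fun m => by
    rw [← Finset.prod_mul_distrib]
    refine Finset.prod_congr rfl fun i _ => ?_
    rw [← mul_pow, Pi.div_apply, div_mul_cancel₀ _ (hq i).ne']
  have hdot : (log ∘ x - log ∘ q) ⬝ᵥ (fun i => (y' i : ℝ) - y i) =
      log (∏ i, (x / q) i ^ y' i) - log (∏ i, (x / q) i ^ y i) := by
    rw [log_prod_pow_eq_sum hz, log_prod_pow_eq_sum hz, ← Finset.sum_sub_distrib]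
    refine Finset.sum_congr rfl fun i _ => ?_
    simp only [Pi.sub_apply, Function.comp_apply, Pi.div_apply, log_div (hx i).ne' (hq i).ne']
    ring
  have hc : 0 < κ * ∏ i, q i ^ y i := mul_pos hκ (Finset.prod_pos fun i _ => pow_pos (hq i) _)
  rw [hdot, sub_eq_zero, hxz, hxz, mul_left_comm κ, mul_left_comm κ', ← hqy,
    mul_left_inj' hc.ne', eq_comm]
  exact (log_injOn_pos.eq_iff (Finset.prod_pos fun i _ => pow_pos (hz i) _)
    (Finset.prod_pos fun i _ => pow_pos (hz i) _)).symm

theorem isDetailedBalancePoint_iff_log_sub_log_mem_dotOrthogonal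
    {R : Finset ((S → ℕ) × (S → ℕ))} {k : (S → ℕ) × (S → ℕ) → ℝ} (hk : ∀ r ∈ R, 0 < k r)
    {q x : S → ℝ} (hq : IsDetailedBalancePoint R k q) (hx : ∀ i, 0 < x i) :
    IsDetailedBalancePoint R k x ↔ log ∘ x - log ∘ q ∈ dotOrthogonal (stoichSubspace R) := by
  rw [stoichSubspace, mem_dotOrthogonal_span, Set.forall_mem_image, IsDetailedBalancePoint,
    and_iff_right hx]
  refine forall₂_congr fun r hr => ?_
  rw [dotProduct_comm]
  exact mul_prod_pow_eq_iff_dotProduct_eq_zero (hk r hr) hq.1 hx (hq.2 r hr)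

lemma log_sub_log_mul_sub_pos {a b : ℝ} (ha : 0 < a) (hb : 0 < b) (hab : a ≠ b) :
    0 < (log a - log b) * (a - b) := by
  rcases hab.lt_or_gt with h | h
  · exact mul_pos_of_neg_of_neg (sub_neg.2 (log_lt_log ha h)) (sub_neg.2 h)
  · exact mul_pos (sub_pos.2 (log_lt_log hb h)) (sub_pos.2 h)

lemma eq_of_log_sub_log_dotProduct_sub_eq_zero {x y : S → ℝ} (hx : ∀ i, 0 < x i)
    (hy : ∀ i, 0 < y i) (h : (log ∘ x - log ∘ y) ⬝ᵥ (x - y) = 0) : x = y := by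
  by_contra hne
  obtain ⟨i, hi⟩ := Function.ne_iff.1 hne
  refine h.not_gt (Finset.sum_pos' (fun j _ => ?_)
    ⟨i, Finset.mem_univ i, log_sub_log_mul_sub_pos (hx i) (hy i) hi⟩)
  rcases eq_or_ne (x j) (y j) with hj | hj
  · simp [hj]
  · exact (log_sub_log_mul_sub_pos (hx j) (hy j) hj).le

noncomputable def expPotential (a μ : S → ℝ) : ℝ :=
  ∑ i, (exp (μ i) - a i * μ i)

lemma continuous_expPotential (a : S → ℝ) : Continuous (expPotential a) := by
  unfold expPotential
  fun_prop

lemma tendsto_expPotential_cocompact_atTop {a : S → ℝ} (ha : ∀ i, 0 < a i) :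
    Tendsto (expPotential a) (cocompact (S → ℝ)) atTop :=
  tendsto_sum_apply_cocompact_atTop (f := fun i m => exp m - a i * m)
    (fun i => bddBelow_range_exp_sub_mul (ha i))
    (fun i => tendsto_exp_sub_mul_cocompact_atTop (ha i))

lemma hasDerivAt_expPotential_add_smul (a μ w : S → ℝ) :
    HasDerivAt (fun t : ℝ => expPotential a (μ + t • w)) ((exp ∘ μ - a) ⬝ᵥ w) 0 := by
  have hterm : ∀ i, HasDerivAt (fun t : ℝ => exp (μ i + t * w i) - a i * (μ i + t * w i))
      ((exp (μ i) - a i) * w i) 0 := fun i => by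
    have hlin : HasDerivAt (fun t : ℝ => μ i + t * w i) (w i) 0 := by
      simpa using ((hasDerivAt_id (0 : ℝ)).mul_const (w i)).const_add (μ i)
    simpa [sub_mul] using hlin.exp.fun_sub (hlin.const_mul (a i))
  simpa [expPotential, dotProduct] using HasDerivAt.fun_sum fun i (_ : i ∈ Finset.univ) => hterm i

lemma exp_sub_dotProduct_eq_zero_of_forall_le_expPotential_add {a μ : S → ℝ}
    {W : Submodule ℝ (S → ℝ)} (hmin : ∀ w ∈ W, expPotential a μ ≤ expPotential a (μ + w)) {w : S → ℝ} (hw : w ∈ W) :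
    (exp ∘ μ - a) ⬝ᵥ w = 0 :=
  IsLocalMin.hasDerivAt_eq_zero (Eventually.of_forall fun t => by
      simpa using hmin _ (W.smul_mem t hw)) (hasDerivAt_expPotential_add_smul a μ w)

theorem exists_pos_sub_mem_and_log_sub_mem_dotOrthogonal (H : Submodule ℝ (S → ℝ))
    (ν : S → ℝ) {x₀ : S → ℝ} (hx₀ : ∀ i, 0 < x₀ i) :
    ∃ x : S → ℝ, (∀ i, 0 < x i) ∧ x - x₀ ∈ H ∧ log ∘ x - ν ∈ dotOrthogonal H := by
  set L : Set (S → ℝ) := {μ | μ - ν ∈ dotOrthogonal H}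
  have hL : IsClosed L :=
    (Submodule.closed_of_finiteDimensional _).preimage (continuous_id.sub continuous_const)
  obtain ⟨μ, hμ, hmin⟩ := (continuous_expPotential x₀).continuousOn.exists_isMinOn' hL
    (x₀ := ν) (by simp [L])
    (((tendsto_expPotential_cocompact_atTop hx₀).eventually_ge_atTop _).filter_mono inf_le_left)
  have hgrad : exp ∘ μ - x₀ ∈ H := by
    rw [← dotOrthogonal_dotOrthogonal H]
    refine fun w hw => (dotProduct_comm _ _).trans
      (exp_sub_dotProduct_eq_zero_of_forall_le_expPotential_add (fun v hv => hmin ?_) hw)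
    simpa [L, add_sub_right_comm] using add_mem hμ hv
  have hlog : log ∘ (exp ∘ μ) = μ := funext fun i => log_exp (μ i)
  exact ⟨exp ∘ μ, fun i => exp_pos _, hgrad, by rwa [hlog]⟩

end

theorem unique_detailed_balance_point_in_class_general
    {S : Type*} [Fintype S]
    (R : Finset ((S → ℕ) × (S → ℕ))) (k : (S → ℕ) × (S → ℕ) → ℝ)
    (hk : ∀ r ∈ R, 0 < k r)
    (hdb : ∃ q : S → ℝ, IsDetailedBalancePoint R k q)
    (x0 : S → ℝ) (hx0 : ∀ i, 0 < x0 i) :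
    ∃! xstar : S → ℝ,
      xstar - x0 ∈ stoichSubspace R ∧ IsDetailedBalancePoint R k xstar := by
  obtain ⟨q, hq⟩ := hdb
  have hdb_iff := fun {x : S → ℝ} (hx : ∀ i, 0 < x i) =>
    isDetailedBalancePoint_iff_log_sub_log_mem_dotOrthogonal hk hq hx
  obtain ⟨xstar, hpos, hsub, horth⟩ :=
    exists_pos_sub_mem_and_log_sub_mem_dotOrthogonal (stoichSubspace R) (log ∘ q) hx0
  refine ⟨xstar, ⟨hsub, (hdb_iff hpos).2 horth⟩, fun y ⟨hy, hydb⟩ => ?_⟩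
  have hlog := sub_mem ((hdb_iff hydb.1).1 hydb) horth
  rw [sub_sub_sub_cancel_right] at hlog
  have hdiff := sub_mem hy hsub
  rw [sub_sub_sub_cancel_right] at hdiff
  exact eq_of_log_sub_log_dotProduct_sub_eq_zero hydb.1 hpos
    ((dotProduct_comm _ _).trans (hlog _ hdiff))

/-- for a detailed balanced reaction system and any strictly positive
`x0`, there is a unique point of detailed balance in `(x0 + H_R) ∩ ℝ^S_{>0}`. -/
theorem unique_detailed_balance_point_in_class
    {S : Type*} [Fintype S]
    (R : Finset ((S → ℕ) × (S → ℕ))) (k : (S → ℕ) × (S → ℕ) → ℝ)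
    (hk : ∀ r ∈ R, 0 < k r)
    (hrev : ∀ r ∈ R, (r.2, r.1) ∈ R)
    (hdb : ∃ q : S → ℝ, IsDetailedBalancePoint R k q)
    (x0 : S → ℝ) (hx0 : ∀ i, 0 < x0 i) :
    ∃! xstar : S → ℝ,
      xstar - x0 ∈ stoichSubspace R ∧ IsDetailedBalancePoint R k xstar :=
  unique_detailed_balance_point_in_class_general R k hk hdb x0 hx0
end

section
/- Let (S, R, k) be a detailed balanced reaction system with point of detailed balance q, and let x : [0,∞) → ℝ^S_{>0} be a mass-action trajectory. Then the function t ↦ D(x(t)‖q) has nonpositive derivative for all t, and its derivative at time t equals zero if and only if x(t) is itself a point of detailed balance. -/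
/-!
Along the trajectory, `d/dt D(x‖q) = ∑ᵢ log (xᵢ/qᵢ) ẋᵢ = ∑_r a_r ⟨y'_r - y_r, log (x/q)⟩`, where
`a_r = k_r x^{y_r}` is the rate of reaction `r`. Detailed balance at `q` turns the inner product
into `log a_{r'} - log a_r`, `r'` being the reverse reaction. Averaging the sum with its reindexing
by `r ↦ r'` gives `-½ ∑_r (a_r - a_{r'}) (log a_r - log a_{r'})`; each summand is nonnegative since
`log` is increasing, and vanishes exactly when `a_r = a_{r'}`, i.e. when `x` is itself a point of
detailed balance.
-/

open Finset Real

noncomputable section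

theorem StrictMonoOn.sub_mul_sub_pos {f : ℝ → ℝ} {s : Set ℝ} (hf : StrictMonoOn f s)
    {a b : ℝ} (ha : a ∈ s) (hb : b ∈ s) (hab : a ≠ b) : 0 < (a - b) * (f a - f b) := by
  rcases hab.lt_or_gt with h | h
  · exact mul_pos_of_neg_of_neg (sub_neg.2 h) (sub_neg.2 (hf ha hb h))
  · exact mul_pos (sub_pos.2 h) (sub_pos.2 (hf hb ha h))

theorem sub_mul_log_sub_log_nonneg {a b : ℝ} (ha : 0 < a) (hb : 0 < b) :
    0 ≤ (a - b) * (log a - log b) := by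
  rcases eq_or_ne a b with rfl | hab
  · simp
  · exact (strictMonoOn_log.sub_mul_sub_pos ha hb hab).le

section LogSum

variable {ι : Type*} {s : Finset ι} {a b : ι → ℝ}

theorem sum_sub_mul_log_sub_log_nonneg (ha : ∀ i ∈ s, 0 < a i) (hb : ∀ i ∈ s, 0 < b i) :
    0 ≤ ∑ i ∈ s, (a i - b i) * (log (a i) - log (b i)) :=
  sum_nonneg fun i hi => sub_mul_log_sub_log_nonneg (ha i hi) (hb i hi)

theorem sum_sub_mul_log_sub_log_eq_zero_iff (ha : ∀ i ∈ s, 0 < a i) (hb : ∀ i ∈ s, 0 < b i) :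
    ∑ i ∈ s, (a i - b i) * (log (a i) - log (b i)) = 0 ↔ ∀ i ∈ s, a i = b i := by
  rw [sum_eq_zero_iff_of_nonneg fun i hi => sub_mul_log_sub_log_nonneg (ha i hi) (hb i hi)]
  refine forall₂_congr fun i hi => ⟨fun h => ?_, fun h => by rw [h, sub_self, zero_mul]⟩
  by_contra hab
  exact (strictMonoOn_log.sub_mul_sub_pos (ha i hi) (hb i hi) hab).ne' h

end LogSum

theorem hasDerivAt_mul_log_div_sub_add {c u : ℝ} (hc : c ≠ 0) (hu : u ≠ 0) :
    HasDerivAt (fun w => w * log (w / c) - w + c) (log (u / c)) u := by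
  have hlog : HasDerivAt (fun w => log (w / c)) (1 / c / (u / c)) u :=
    ((hasDerivAt_id' u).div_const c).log (div_ne_zero hu hc)
  refine ((((hasDerivAt_id' u).fun_mul hlog).fun_sub (hasDerivAt_id' u)).add_const c).congr_deriv ?_
  field_simp
  ring

theorem hasDerivAt_KL {ι : Type*} [Fintype ι] {x : ℝ → ι → ℝ} {v q : ι → ℝ} {t : ℝ}
    (hx : HasDerivAt x v t) (hxt : ∀ i, x t i ≠ 0) (hq : ∀ i, q i ≠ 0) :
    HasDerivAt (fun s => KL (x s) q) (∑ i, log (x t i / q i) * v i) t := by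
  unfold KL
  refine HasDerivAt.fun_sum fun i _ => ?_
  exact (hasDerivAt_mul_log_div_sub_add (hq i) (hxt i)).comp t (hasDerivAt_pi.1 hx i)

theorem Finset.sum_comp_swap {α M : Type*} [AddCommMonoid M] {R : Finset (α × α)}
    (hR : ∀ r ∈ R, r.swap ∈ R) (f : α × α → M) :
    ∑ r ∈ R, f r.swap = ∑ r ∈ R, f r :=
  sum_nbij' Prod.swap Prod.swap hR hR (fun _ _ => rfl) (fun _ _ => rfl) (fun _ _ => rfl)

theorem two_mul_sum_mul_sub_swap {α : Type*} {R : Finset (α × α)} (hR : ∀ r ∈ R, r.swap ∈ R)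
    (a h : α × α → ℝ) :
    2 * ∑ r ∈ R, a r * (h r.swap - h r) = -∑ r ∈ R, (a r - a r.swap) * (h r - h r.swap) := by
  have hreindex := sum_comp_swap hR fun r => a r * (h r.swap - h r)
  simp only [Prod.swap_swap] at hreindex
  have hsplit : -∑ r ∈ R, (a r - a r.swap) * (h r - h r.swap) =
      ∑ r ∈ R, a r * (h r.swap - h r) + ∑ r ∈ R, a r.swap * (h r - h r.swap) := by
    rw [← sum_add_distrib, ← sum_neg_distrib]
    exact sum_congr rfl fun r _ => by ring
  rw [hsplit, hreindex]
  ring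

section MassAction

variable {S : Type*} [Fintype S]

def reactionRate (k : (S → ℕ) × (S → ℕ) → ℝ) (x : S → ℝ) (r : (S → ℕ) × (S → ℕ)) : ℝ :=
  k r * ∏ i, x i ^ r.1 i

def massActionField (R : Finset ((S → ℕ) × (S → ℕ))) (k : (S → ℕ) × (S → ℕ) → ℝ) (x : S → ℝ) :
    S → ℝ :=
  ∑ r ∈ R, reactionRate k x r • fun i => ((r.2 i : ℝ) - r.1 i)

variable {R : Finset ((S → ℕ) × (S → ℕ))} {k : (S → ℕ) × (S → ℕ) → ℝ} {x q : S → ℝ}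

theorem isDetailedBalancePoint_iff : IsDetailedBalancePoint R k x ↔
    (∀ i, 0 < x i) ∧ ∀ r ∈ R, reactionRate k x r = reactionRate k x r.swap :=
  Iff.rfl

theorem reactionRate_pos {r : (S → ℕ) × (S → ℕ)} (hk : 0 < k r) (hx : ∀ i, 0 < x i) :
    0 < reactionRate k x r :=
  mul_pos hk (prod_pos fun i _ => pow_pos (hx i) _)

theorem log_prod_pow (hx : ∀ i, 0 < x i) (y : S → ℕ) :
    log (∏ i, x i ^ y i) = ∑ i, (y i : ℝ) * log (x i) := by
  rw [log_prod fun i _ => (pow_pos (hx i) _).ne']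
  simp only [log_pow]

theorem log_reactionRate_swap_sub_log_reactionRate {r : (S → ℕ) × (S → ℕ)} (hk : 0 < k r)
    (hk' : 0 < k r.swap) (hx : ∀ i, 0 < x i) (hq : ∀ i, 0 < q i)
    (hdb : reactionRate k q r = reactionRate k q r.swap) :
    log (reactionRate k x r.swap) - log (reactionRate k x r) =
      ∑ i, ((r.2 i : ℝ) - r.1 i) * log (x i / q i) := by
  have hprod {z : S → ℝ} (hz : ∀ i, 0 < z i) (y : S → ℕ) : ∏ i, z i ^ y i ≠ 0 :=
    (prod_pos fun i _ => pow_pos (hz i) _).ne'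
  have hlog := congrArg log hdb
  simp only [reactionRate, Prod.fst_swap] at hlog ⊢
  rw [log_mul hk.ne' (hprod hq _), log_mul hk'.ne' (hprod hq _)] at hlog
  rw [log_mul hk.ne' (hprod hx _), log_mul hk'.ne' (hprod hx _)]
  simp only [log_prod_pow hx, log_prod_pow hq] at hlog ⊢
  simp only [log_div (hx _).ne' (hq _).ne', sub_mul, mul_sub, sum_sub_distrib] at hlog ⊢
  linarith

theorem sum_mul_massActionField (ℓ : S → ℝ) :
    ∑ i, ℓ i * massActionField R k x i =
      ∑ r ∈ R, reactionRate k x r * ∑ i, ((r.2 i : ℝ) - r.1 i) * ℓ i := by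
  simp only [massActionField, Finset.sum_apply, Pi.smul_apply, smul_eq_mul, mul_sum]
  rw [sum_comm]
  exact sum_congr rfl fun r _ => sum_congr rfl fun i _ => by ring

theorem two_mul_sum_log_div_mul_massActionField (hR : ∀ r ∈ R, r.swap ∈ R)
    (hk : ∀ r ∈ R, 0 < k r) (hq : IsDetailedBalancePoint R k q) (hx : ∀ i, 0 < x i) :
    2 * ∑ i, log (x i / q i) * massActionField R k x i =
      -∑ r ∈ R, (reactionRate k x r - reactionRate k x r.swap) *
        (log (reactionRate k x r) - log (reactionRate k x r.swap)) := by
  rw [sum_mul_massActionField, ← two_mul_sum_mul_sub_swap hR]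
  congr 1
  refine sum_congr rfl fun r hr => ?_
  rw [log_reactionRate_swap_sub_log_reactionRate (hk r hr) (hk _ (hR r hr)) hx hq.1 (hq.2 r hr)]

end MassAction

end

/-- along a mass-action trajectory of a detailed balanced reaction
system with point of detailed balance `q`, the function `t ↦ D(x(t)‖q)` has
nonpositive derivative, vanishing exactly when `x(t)` is itself a point of
detailed balance. -/
theorem relative_entropy_lyapunov_detailed_balance
    {S : Type*} [Fintype S]
    (R : Finset ((S → ℕ) × (S → ℕ))) (k : (S → ℕ) × (S → ℕ) → ℝ)
    (hk : ∀ r ∈ R, 0 < k r)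
    (hrev : ∀ r ∈ R, (r.2, r.1) ∈ R)
    (q : S → ℝ) (hq : IsDetailedBalancePoint R k q)
    (x : ℝ → S → ℝ)
    (hxpos : ∀ t, 0 ≤ t → ∀ i, 0 < x t i)
    (hode : ∀ t, 0 ≤ t → HasDerivAt x
      (∑ r ∈ R, (k r * ∏ i, x t i ^ r.1 i) •
        (fun i => ((r.2 i : ℝ) - (r.1 i : ℝ)))) t) :
    ∀ t, 0 ≤ t → ∃ d : ℝ,
      HasDerivAt (fun s => KL (x s) q) d t ∧ d ≤ 0 ∧
        (d = 0 ↔ IsDetailedBalancePoint R k (x t)) := by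
  intro t ht
  have hx := hxpos t ht
  have hrate : ∀ r ∈ R, 0 < reactionRate k (x t) r := fun r hr => reactionRate_pos (hk r hr) hx
  have hrate_swap : ∀ r ∈ R, 0 < reactionRate k (x t) r.swap := fun r hr => hrate _ (hrev r hr)
  have hproduction := two_mul_sum_log_div_mul_massActionField hrev hk hq hx
  have hnonneg := sum_sub_mul_log_sub_log_nonneg hrate hrate_swap
  have hderiv : HasDerivAt (fun s => KL (x s) q)
      (∑ i, log (x t i / q i) * massActionField R k (x t) i) t :=
    hasDerivAt_KL (hode t ht) (fun i => (hx i).ne') (fun i => (hq.1 i).ne')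
  refine ⟨_, hderiv, by linarith, ?_⟩
  rw [isDetailedBalancePoint_iff, and_iff_right hx,
    ← sum_sub_mul_log_sub_log_eq_zero_iff hrate hrate_swap]
  constructor <;> intro h <;> linarith
end

section
/- (M-projection scheme, Lyapunov property.) Let A = (a_{ij}) be an m×n matrix of nonnegative integers, c ∈ ℝ^n_{>0}, and define y_A : ℝ^m_{>0} → ℝ^n_{>0} by y_A(θ)_j := c_j Π_{i=1}^m θ_i^{a_{ij}}. Fix x ∈ ℝ^n_{>0}, and let θ : [0,∞) → ℝ^m_{>0} be differentiable with θ̇(t) = A(x − y_A(θ(t))). Then d/dt D(x‖y_A(θ(t))) ≤ 0 for all t, with equality at time t if and only if A(x − y_A(θ(t))) = 0. -/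
/-- The exponential-family parametrization `y_A(θ)_j = c_j ∏_i θ_i^{a_{ij}}`. -/
def yA {m n : ℕ} (A : Matrix (Fin m) (Fin n) ℕ) (c : Fin n → ℝ)
    (θ : Fin m → ℝ) : Fin n → ℝ :=
  fun j => c j * ∏ i, θ i ^ A i j

open Finset

section Calculus

variable {ι : Type*} [Fintype ι] {t : ℝ}

theorem HasDerivAt.fun_prod_of_logDeriv {u : ι → ℝ → ℝ} {r : ι → ℝ}
    (hu : ∀ i, HasDerivAt (u i) (u i t * r i) t) :
    HasDerivAt (fun s => ∏ i, u i s) ((∏ i, u i t) * ∑ i, r i) t := by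
  classical
  refine (HasDerivAt.fun_finsetProd (fun i (_ : i ∈ univ) => hu i)).congr_deriv ?_
  rw [mul_sum]
  refine sum_congr rfl fun i _ => ?_
  rw [smul_eq_mul, ← prod_erase_mul _ _ (mem_univ i)]
  ring

theorem HasDerivAt.pow_of_logDeriv {f : ℝ → ℝ} {f' : ℝ} (hf : HasDerivAt f f' t)
    (hne : f t ≠ 0) (a : ℕ) :
    HasDerivAt (fun s => f s ^ a) (f t ^ a * (a * f' / f t)) t := by
  refine (hf.fun_pow a).congr_deriv ?_
  rcases a with _ | k
  · simp
  · field_simp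
    simp only [Nat.add_sub_cancel, pow_succ]
    ring

theorem HasDerivAt.const_mul_prod_pow {f : ℝ → ι → ℝ} {f' : ι → ℝ}
    (hf : ∀ i, HasDerivAt (fun s => f s i) (f' i) t) (hne : ∀ i, f t i ≠ 0)
    (c : ℝ) (a : ι → ℕ) :
    HasDerivAt (fun s => c * ∏ i, f s i ^ a i)
      ((c * ∏ i, f t i ^ a i) * ∑ i, a i * f' i / f t i) t := by
  rw [mul_assoc]
  exact (HasDerivAt.fun_prod_of_logDeriv fun i => (hf i).pow_of_logDeriv (hne i) (a i)).const_mul c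

theorem hasDerivAt_KL_right (x : ι → ℝ) {g : ℝ → ι → ℝ} {g' : ι → ℝ}
    (hg : ∀ j, HasDerivAt (fun s => g s j) (g' j) t) (hne : ∀ j, g t j ≠ 0) :
    HasDerivAt (fun s => KL x (g s)) (∑ j, (1 - x j / g t j) * g' j) t := by
  unfold KL
  refine HasDerivAt.fun_sum fun j _ => ?_
  by_cases hxj : x j = 0
  · simpa [hxj] using hg j
  have hlog := ((hasDerivAt_const t (x j)).fun_div (hg j) (hne j)).log
    (div_ne_zero hxj (hne j))
  refine (((hlog.const_mul (x j)).sub_const (x j)).fun_add (hg j)).congr_deriv ?_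
  field_simp [hne j]
  ring

end Calculus

theorem hasDerivAt_yA {m n : ℕ} (A : Matrix (Fin m) (Fin n) ℕ) (c : Fin n → ℝ)
    {θ : ℝ → Fin m → ℝ} {θ' : Fin m → ℝ} {t : ℝ} (hθ : HasDerivAt θ θ' t)
    (hne : ∀ i, θ t i ≠ 0) (j : Fin n) :
    HasDerivAt (fun s => yA A c (θ s) j)
      (yA A c (θ t) j * ∑ i, (A i j : ℝ) * θ' i / θ t i) t :=
  HasDerivAt.const_mul_prod_pow (hasDerivAt_pi.mp hθ) hne (c j) (A · j)

theorem yA_pos {m n : ℕ} (A : Matrix (Fin m) (Fin n) ℕ) {c : Fin n → ℝ} (hc : ∀ j, 0 < c j)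
    {θ : Fin m → ℝ} (hθ : ∀ i, 0 < θ i) (j : Fin n) : 0 < yA A c θ j :=
  mul_pos (hc j) (prod_pos fun i _ => pow_pos (hθ i) _)

section Algebra

variable {ι κ : Type*} [Fintype ι] [Fintype κ]

theorem sum_sub_mul_sum_eq_neg_sum_sq_div (B : ι → κ → ℝ) (x y : κ → ℝ) (θ : ι → ℝ) :
    ∑ j, (y j - x j) * ∑ i, B i j * (∑ k, B i k * (x k - y k)) / θ i
      = -∑ i, (∑ k, B i k * (x k - y k)) ^ 2 / θ i := by
  have transpose : ∀ w : ι → ℝ, ∑ j, (y j - x j) * ∑ i, B i j * w i / θ i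
      = -∑ i, w i / θ i * ∑ k, B i k * (x k - y k) := fun w => by
    simp only [mul_sum, ← sum_neg_distrib]
    rw [sum_comm]
    exact sum_congr rfl fun i _ => sum_congr rfl fun j _ => by ring
  rw [transpose]
  exact congrArg Neg.neg (sum_congr rfl fun i _ => by ring)

theorem sum_sq_div_eq_zero_iff {w θ : ι → ℝ} (hθ : ∀ i, 0 < θ i) :
    ∑ i, w i ^ 2 / θ i = 0 ↔ ∀ i, w i = 0 := by
  rw [sum_eq_zero_iff_of_nonneg fun i _ => div_nonneg (sq_nonneg _) (hθ i).le]
  simp [(hθ _).ne']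

end Algebra

theorem mprojection_lyapunov_general
    {m n : ℕ} (A : Matrix (Fin m) (Fin n) ℕ) (c : Fin n → ℝ)
    (hc : ∀ j, 0 < c j)
    (x : Fin n → ℝ)
    (θ : ℝ → Fin m → ℝ)
    (hθpos : ∀ t, 0 ≤ t → ∀ i, 0 < θ t i)
    (hode : ∀ t, 0 ≤ t → HasDerivAt θ
      (fun i => ∑ j, (A i j : ℝ) * (x j - yA A c (θ t) j)) t) :
    ∀ t, 0 ≤ t → ∃ d : ℝ,
      HasDerivAt (fun s => KL x (yA A c (θ s))) d t ∧ d ≤ 0 ∧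
        (d = 0 ↔ ∀ i, ∑ j, (A i j : ℝ) * (x j - yA A c (θ t) j) = 0) := by
  intro t ht
  have hθ := hθpos t ht
  have hy := yA_pos A hc hθ
  have hKL := hasDerivAt_KL_right x (hasDerivAt_yA A c (hode t ht) (fun i => (hθ i).ne'))
    (fun j => (hy j).ne')
  have hd : ∑ j, (1 - x j / yA A c (θ t) j) *
      (yA A c (θ t) j * ∑ i, (A i j : ℝ) * (∑ k, (A i k : ℝ) * (x k - yA A c (θ t) k)) / θ t i)
      = -∑ i, (∑ k, (A i k : ℝ) * (x k - yA A c (θ t) k)) ^ 2 / θ t i := by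
    rw [← sum_sub_mul_sum_eq_neg_sum_sq_div]
    refine sum_congr rfl fun j _ => ?_
    field_simp [(hy j).ne']
  refine ⟨_, hd ▸ hKL, ?_, ?_⟩
  · exact neg_nonpos.mpr (sum_nonneg fun i _ => div_nonneg (sq_nonneg _) (hθ i).le)
  · rw [neg_eq_zero, sum_sq_div_eq_zero_iff hθ]

/-- M-projection scheme, Lyapunov property: along a trajectory of
`θ̇ = A(x − y_A(θ))`, the derivative of `t ↦ D(x‖y_A(θ(t)))` is nonpositive,
vanishing at time `t` iff `A(x − y_A(θ(t))) = 0`. -/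
theorem mprojection_lyapunov
    {m n : ℕ} (A : Matrix (Fin m) (Fin n) ℕ) (c : Fin n → ℝ)
    (hc : ∀ j, 0 < c j)
    (x : Fin n → ℝ) (hx : ∀ j, 0 < x j)
    (θ : ℝ → Fin m → ℝ)
    (hθpos : ∀ t, 0 ≤ t → ∀ i, 0 < θ t i)
    (hode : ∀ t, 0 ≤ t → HasDerivAt θ
      (fun i => ∑ j, (A i j : ℝ) * (x j - yA A c (θ t) j)) t) :
    ∀ t, 0 ≤ t → ∃ d : ℝ,
      HasDerivAt (fun s => KL x (yA A c (θ s))) d t ∧ d ≤ 0 ∧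
        (d = 0 ↔ ∀ i, ∑ j, (A i j : ℝ) * (x j - yA A c (θ t) j) = 0) :=
  mprojection_lyapunov_general A c hc x θ hθpos hode
end
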